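/- For n ≥ 2, let F = D_n[V(D_n) ∖ {b_1}] be the induced subdigraph of D_n on the reachable fragment V(D_n) ∖ {b_1}. Then ddp(F − a_1) = n − 1, while for every vertex v of F with v ≠ a_1 one has ddp(F − v) ≥ n. (Hence a_1 is the unique vertex whose removal from F decreases the DAG-depth, i.e., the only optimal first cop placement in F.) -/

import Mathlib

open scoped Classical

noncomputable section

/-- A finite directed graph: a finite vertex set together with an adjacency
relation whose edges join vertices of the graph. -/
structure FinDigraph (α : Type) where
  verts : Finset α
  Adj : α → α → Prop
  adj_mem : ∀ u v, Adj u v → u ∈ verts ∧ v ∈ verts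

namespace FinDigraph

variable {α β : Type}

/-- The out-neighbourhood `N⁺_D(v)`. -/
def outNbhd (D : FinDigraph α) (v : α) : Set α := {u | D.Adj v u}

/-- The set of vertices reachable from `s` by a (possibly trivial) directed path. -/
def reachSet (D : FinDigraph α) (s : α) : Finset α :=
  D.verts.filter fun v => Relation.ReflTransGen D.Adj s v

/-- A reachable fragment: an inclusion-maximal set among the reachable sets. -/
def IsFragment (D : FinDigraph α) (R : Finset α) : Prop :=
  (∃ s ∈ D.verts, R = D.reachSet s) ∧
  ∀ s ∈ D.verts, R ⊆ D.reachSet s → R = D.reachSet s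

/-- The collection of all reachable fragments of `D`. -/
def fragments (D : FinDigraph α) : Finset (Finset α) :=
  D.verts.powerset.filter fun R => D.IsFragment R

/-- The induced subdigraph `D[S]`. -/
def induce (D : FinDigraph α) (S : Finset α) : FinDigraph α where
  verts := D.verts ∩ S
  Adj u v := D.Adj u v ∧ u ∈ S ∧ v ∈ S
  adj_mem := fun u v h => ⟨Finset.mem_inter.mpr ⟨(D.adj_mem u v h.1).1, h.2.1⟩,
    Finset.mem_inter.mpr ⟨(D.adj_mem u v h.1).2, h.2.2⟩⟩

/-- Deletion of a vertex: `D − v = D[V(D) ∖ {v}]`. -/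
def deleteVert (D : FinDigraph α) (v : α) : FinDigraph α :=
  D.induce (D.verts.erase v)

/-- Fuel-based helper for DAG-depth; the fuel `|V(D)|` always suffices since each
recursive call strictly decreases the number of vertices. -/
def ddpAux : ℕ → FinDigraph α → ℕ
  | 0, _ => 0
  | n+1, D =>
    if hcard : D.verts.card ≤ 1 then 1
    else if D.fragments.card = 1 then
      1 + D.verts.inf' (Finset.card_pos.mp (by omega)) fun v => ddpAux n (D.deleteVert v)
    else
      D.fragments.sup fun R => ddpAux n (D.induce R)

/-- The DAG-depth of a digraph. -/
def ddp (D : FinDigraph α) : ℕ := ddpAux D.verts.card D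

/-- A DAG: a (finite) digraph with no directed cycles. -/
def IsDag (P : FinDigraph α) : Prop := ∀ v, ¬ Relation.TransGen P.Adj v v

/-- A root of a DAG: a vertex of indegree zero. -/
def IsRoot (P : FinDigraph α) (r : α) : Prop := r ∈ P.verts ∧ ∀ u, ¬ P.Adj u r

/-- `y` is a descendant of `x`: there is a (possibly trivial) directed path from `x` to `y`. -/
def Desc (P : FinDigraph α) (x y : α) : Prop := Relation.ReflTransGen P.Adj x y

/-- `l` is a directed path in `P` starting at a root of `P` and ending at `v`. -/
def IsRootPath (P : FinDigraph α) (l : List α) (v : α) : Prop :=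
  l ≠ [] ∧ l.Chain' P.Adj ∧ (∀ x ∈ l, x ∈ P.verts) ∧
  (∃ r, l.head? = some r ∧ P.IsRoot r) ∧ l.getLast? = some v

/-- The depth of a DAG: the maximum number of vertices on a directed path. -/
def depth (P : FinDigraph α) : ℕ :=
  sSup {n : ℕ | ∃ l : List α, l.Chain' P.Adj ∧ (∀ x ∈ l, x ∈ P.verts) ∧ l.length = n}

/-- The Neighbor cover condition for a DAG-depth decomposition `(P, org)` of `D`. -/
def NeighborCover (D : FinDigraph α) (P : FinDigraph β) (org : β → α) : Prop :=
  ∀ v' ∈ P.verts, ∀ u, D.Adj (org v') u →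
    (∃ u' ∈ P.verts, org u' = u ∧ P.Desc v' u') ∨
    (∀ l, P.IsRootPath l v' → ∃ u' ∈ l, org u' = u)

/-- `(P, org)` is a valid DAG-depth decomposition of `D`: `P` is a DAG, `org` maps
`V(P)` onto `V(D)`, and the Neighbor cover condition holds. -/
def IsValidDecomp (D : FinDigraph α) (P : FinDigraph β) (org : β → α) : Prop :=
  P.IsDag ∧ (∀ v' ∈ P.verts, org v' ∈ D.verts) ∧
  (∀ v ∈ D.verts, ∃ v' ∈ P.verts, org v' = v) ∧
  NeighborCover D P org

end FinDigraph

namespace FinDigraph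

/-- The digraph `Dn n` with vertices `a_1, …, a_n, b_1, …, b_n`, where `a_i = (i, false)`
and `b_i = (i, true)`, and edges `(x_i, y_j)` for all `1 ≤ i < j ≤ n` and all choices
`x, y ∈ {a, b}`. -/
def Dn (n : ℕ) : FinDigraph (ℕ × Bool) where
  verts := Finset.Icc 1 n ×ˢ Finset.univ
  Adj u v := 1 ≤ u.1 ∧ u.1 < v.1 ∧ v.1 ≤ n
  adj_mem := by
    intro u v h
    simp only [Finset.mem_product, Finset.mem_Icc, Finset.mem_univ, and_true]
    omega

end FinDigraph

/-!
Both `F − a₁` and `F − v` are *layered*: every vertex `x` has a level `x.1`, and `x → y` is an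
edge exactly when `x.1 < y.1`. The DAG-depth of a layered digraph is its number of nonempty
levels. If the lowest level is a single vertex `s`, the digraph is its only reachable fragment;
deleting a vertex empties at most one level, and deleting `s` empties one. Otherwise the
reachable fragments are the reachable sets of the lowest vertices, each of which meets every
level. Now `F − a₁` has levels `2, …, n`, whereas for `v ≠ a₁` all levels `1, …, n` survive in
`F − v`: level `ℓ` keeps `a_ℓ`, or `b_ℓ` if `v = a_ℓ`.
-/

namespace Finset

variable {α β : Type*} [DecidableEq α] [DecidableEq β] {s : Finset α} {f : α → β} {a : α}

lemma card_image_le_card_image_erase_add_one (s : Finset α) (f : α → β) (a : α) :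
    (s.image f).card ≤ ((s.erase a).image f).card + 1 := by
  have := card_le_card (erase_image_subset_image_erase f s a)
  have := pred_card_le_card_erase (s := s.image f) (a := f a)
  omega

lemma card_image_erase_add_one (ha : a ∈ s) (huniq : ∀ b ∈ s, f b = f a → b = a) :
    ((s.erase a).image f).card + 1 = (s.image f).card := by
  have himage : s.image f = insert (f a) ((s.erase a).image f) := by
    rw [← image_insert, insert_erase ha]
  rw [himage, card_insert_of_notMem]
  simp only [mem_image, mem_erase, not_exists, not_and]
  exact fun b ⟨hba, hb⟩ hfb => hba (huniq b hb hfb)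

lemma inf'_card_image_erase_add_one (hne : s.Nonempty) (ha : a ∈ s)
    (huniq : ∀ b ∈ s, f b = f a → b = a) :
    s.inf' hne (fun b => ((s.erase b).image f).card) + 1 = (s.image f).card := by
  refine le_antisymm ?_ ?_
  · exact card_image_erase_add_one ha huniq ▸ Nat.add_le_add_right (inf'_le _ ha) 1
  · have := le_inf' hne (fun b => ((s.erase b).image f).card) (a := (s.image f).card - 1)
      fun b _ => by have := card_image_le_card_image_erase_add_one s f b; omega
    omega

end Finset

namespace FinDigraph

variable {α β : Type} [LinearOrder β]

def IsLayered (D : FinDigraph α) (f : α → β) : Prop :=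
  ∀ u v, D.Adj u v ↔ u ∈ D.verts ∧ v ∈ D.verts ∧ f u < f v

def minLayer (D : FinDigraph α) (f : α → β) : Finset α :=
  D.verts.filter fun s => ∀ t ∈ D.verts, f s ≤ f t

lemma reachSet_subset_verts (D : FinDigraph α) (s : α) : D.reachSet s ⊆ D.verts :=
  Finset.filter_subset _ _

lemma verts_induce_of_subset {D : FinDigraph α} {S : Finset α} (h : S ⊆ D.verts) :
    (D.induce S).verts = S :=
  Finset.inter_eq_right.mpr h

lemma verts_deleteVert (D : FinDigraph α) (v : α) : (D.deleteVert v).verts = D.verts.erase v :=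
  verts_induce_of_subset (Finset.erase_subset _ _)

lemma mem_fragments {D : FinDigraph α} {R : Finset α} : R ∈ D.fragments ↔ D.IsFragment R := by
  rw [fragments, Finset.mem_filter, Finset.mem_powerset, and_iff_right_iff_imp]
  rintro ⟨⟨s, -, rfl⟩, -⟩
  exact D.reachSet_subset_verts s

lemma minLayer_subset (D : FinDigraph α) (f : α → β) : D.minLayer f ⊆ D.verts :=
  Finset.filter_subset _ _

lemma minLayer_nonempty {D : FinDigraph α} (f : α → β) (hne : D.verts.Nonempty) :
    (D.minLayer f).Nonempty :=
  let ⟨s, hs, hmin⟩ := D.verts.exists_min_image f hne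
  ⟨s, Finset.mem_filter.mpr ⟨hs, hmin⟩⟩

namespace IsLayered

variable {D : FinDigraph α} {f : α → β}

lemma induce (hl : D.IsLayered f) (S : Finset α) : (D.induce S).IsLayered f := by
  intro u v
  simp only [FinDigraph.induce, Finset.mem_inter, hl u v]
  tauto

lemma deleteVert (hl : D.IsLayered f) (v : α) : (D.deleteVert v).IsLayered f :=
  hl.induce _

lemma eq_or_lt_of_reflTransGen (hl : D.IsLayered f) {s v : α}
    (h : Relation.ReflTransGen D.Adj s v) : v = s ∨ f s < f v := by
  induction h with
  | refl => exact Or.inl rfl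
  | tail _ hvw ih =>
    have hlt := ((hl _ _).mp hvw).2.2
    rcases ih with rfl | h
    exacts [Or.inr hlt, Or.inr (h.trans hlt)]

lemma mem_reachSet (hl : D.IsLayered f) {s v : α} (hs : s ∈ D.verts) :
    v ∈ D.reachSet s ↔ v ∈ D.verts ∧ (v = s ∨ f s < f v) := by
  rw [reachSet, Finset.mem_filter, and_congr_right_iff]
  refine fun hv => ⟨hl.eq_or_lt_of_reflTransGen, ?_⟩
  rintro (rfl | hlt)
  exacts [.refl, .single ((hl s v).mpr ⟨hs, hv, hlt⟩)]

lemma self_mem_reachSet (hl : D.IsLayered f) {s : α} (hs : s ∈ D.verts) : s ∈ D.reachSet s :=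
  (hl.mem_reachSet hs).mpr ⟨hs, Or.inl rfl⟩

lemma injOn_reachSet (hl : D.IsLayered f) : Set.InjOn D.reachSet D.verts := by
  intro s hs t ht hst
  have hst' := (hl.mem_reachSet ht).mp (hst ▸ hl.self_mem_reachSet hs)
  have hts' := (hl.mem_reachSet hs).mp (hst ▸ hl.self_mem_reachSet ht)
  rcases hst'.2, hts'.2 with ⟨h | h, h' | h'⟩
  exacts [h, h, h'.symm, absurd h (lt_asymm h')]

lemma isFragment_iff (hl : D.IsLayered f) {R : Finset α} :
    D.IsFragment R ↔ ∃ s ∈ D.minLayer f, R = D.reachSet s := by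
  constructor
  · rintro ⟨⟨s, hs, rfl⟩, hmax⟩
    refine ⟨s, Finset.mem_filter.mpr ⟨hs, fun t ht => not_lt.mp fun hts => ?_⟩, rfl⟩
    have hsub : D.reachSet s ⊆ D.reachSet t := fun v hv => by
      obtain ⟨hv, hvs⟩ := (hl.mem_reachSet hs).mp hv
      refine (hl.mem_reachSet ht).mpr ⟨hv, Or.inr ?_⟩
      rcases hvs with rfl | h
      exacts [hts, hts.trans h]
    have ht' := (hl.mem_reachSet hs).mp (hmax t ht hsub ▸ hl.self_mem_reachSet ht)
    rcases ht'.2 with rfl | h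
    exacts [lt_irrefl _ hts, lt_asymm h hts]
  · rintro ⟨s, hs, rfl⟩
    obtain ⟨hs, hmin⟩ := Finset.mem_filter.mp hs
    refine ⟨⟨s, hs, rfl⟩, fun t ht hsub => ?_⟩
    rcases ((hl.mem_reachSet ht).mp (hsub (hl.self_mem_reachSet hs))).2 with rfl | h
    exacts [rfl, absurd (hmin t ht) (not_le.mpr h)]

lemma fragments_eq (hl : D.IsLayered f) : D.fragments = (D.minLayer f).image D.reachSet := by
  ext R
  simp only [mem_fragments, hl.isFragment_iff, Finset.mem_image, eq_comm]

lemma card_fragments (hl : D.IsLayered f) : D.fragments.card = (D.minLayer f).card := by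
  rw [hl.fragments_eq, Finset.card_image_of_injOn (hl.injOn_reachSet.mono (D.minLayer_subset f))]

lemma image_reachSet (hl : D.IsLayered f) {s : α} (hs : s ∈ D.minLayer f) :
    (D.reachSet s).image f = D.verts.image f := by
  obtain ⟨hs, hmin⟩ := Finset.mem_filter.mp hs
  refine (Finset.image_subset_image (D.reachSet_subset_verts s)).antisymm fun i hi => ?_
  obtain ⟨w, hw, rfl⟩ := Finset.mem_image.mp hi
  rcases (hmin w hw).eq_or_lt with h | h
  · exact h ▸ Finset.mem_image_of_mem f (hl.self_mem_reachSet hs)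
  · exact Finset.mem_image_of_mem f ((hl.mem_reachSet hs).mpr ⟨hw, Or.inr h⟩)

lemma card_reachSet_lt (hl : D.IsLayered f) {s t : α} (hs : s ∈ D.verts)
    (ht : t ∈ D.minLayer f) (hts : t ≠ s) : (D.reachSet s).card < D.verts.card := by
  obtain ⟨ht, hmin⟩ := Finset.mem_filter.mp ht
  refine Finset.card_lt_card ((Finset.ssubset_iff_of_subset (D.reachSet_subset_verts s)).mpr
    ⟨t, ht, fun htR => ?_⟩)
  rcases ((hl.mem_reachSet hs).mp htR).2 with h | h
  exacts [hts h, absurd (hmin s hs) (not_le.mpr h)]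

-- `ddpAux (k + 1)` is `1` on the empty digraph, whereas `ddp` of the empty digraph is `0`.
theorem ddpAux_eq : ∀ (fuel : ℕ) {D : FinDigraph α}, D.IsLayered f →
    D.verts.Nonempty → D.verts.card ≤ fuel → ddpAux fuel D = (D.verts.image f).card
  | 0, _, _, hne, hc => absurd hne.card_pos (by omega)
  | fuel + 1, D, hl, hne, hc => by
    have ih : ∀ {E : FinDigraph α}, E.IsLayered f → E.verts.Nonempty →
        E.verts.card < D.verts.card → ddpAux fuel E = (E.verts.image f).card :=
      fun hE hE' hlt => ddpAux_eq fuel hE hE' (by omega)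
    rw [ddpAux]
    split_ifs with hsingle hunique
    · obtain ⟨v, hv⟩ := Finset.card_eq_one.mp (le_antisymm hsingle hne.card_pos)
      simp [hv]
    · obtain ⟨s, hs⟩ := Finset.card_eq_one.mp (hl.card_fragments ▸ hunique)
      obtain ⟨hsD, hmin⟩ := Finset.mem_filter.mp (hs ▸ Finset.mem_singleton_self s)
      have huniq : ∀ t ∈ D.verts, f t = f s → t = s := fun t ht hts =>
        Finset.mem_singleton.mp (hs ▸ Finset.mem_filter.mpr ⟨ht, hts ▸ hmin⟩)
      have hdel : ∀ v ∈ D.verts,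
          ddpAux fuel (D.deleteVert v) = ((D.verts.erase v).image f).card := fun v hv => by
        rw [ih (hl.deleteVert v), verts_deleteVert] <;> rw [verts_deleteVert]
        · exact Finset.card_pos.mp (by rw [Finset.card_erase_of_mem hv]; omega)
        · exact Finset.card_erase_lt_of_mem hv
      rw [Finset.inf'_congr _ rfl hdel, ← Finset.inf'_card_image_erase_add_one hne hsD huniq]
      omega
    · obtain ⟨s, hs⟩ := minLayer_nonempty f hne
      have hmany : 1 < (D.minLayer f).card := by
        have := hl.card_fragments ▸ hunique
        have := Finset.card_pos.mpr ⟨s, hs⟩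
        omega
      rw [hl.fragments_eq, Finset.sup_image,
        Finset.sup_congr rfl (g := fun _ => (D.verts.image f).card), Finset.sup_const ⟨s, hs⟩]
      intro t ht
      obtain ⟨u, hu, hut⟩ := Finset.exists_mem_ne hmany t
      have htD := D.minLayer_subset f ht
      have hR := verts_induce_of_subset (D.reachSet_subset_verts t)
      rw [Function.comp_apply, ih (hl.induce _), hR, hl.image_reachSet ht] <;> rw [hR]
      · exact ⟨t, hl.self_mem_reachSet htD⟩
      · exact hl.card_reachSet_lt htD hu hut

theorem ddp_eq (hl : D.IsLayered f) : D.ddp = (D.verts.image f).card := by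
  rcases D.verts.eq_empty_or_nonempty with hempty | hne
  · simp [ddp, ddpAux, hempty]
  · exact ddpAux_eq _ hl hne le_rfl

end IsLayered

lemma isLayered_Dn (n : ℕ) : (Dn n).IsLayered Prod.fst := by
  intro u v
  simp only [Dn, Finset.mem_product, Finset.mem_Icc, Finset.mem_univ, and_true]
  omega

lemma image_fst_verts_deleteVert_a₁ (n : ℕ) :
    (((Dn n).induce ((Dn n).verts.erase (1, true))).deleteVert (1, false)).verts.image Prod.fst =
      Finset.Icc 2 n := by
  ext ℓ
  simp only [deleteVert, induce, Dn, Finset.mem_image, Finset.mem_inter, Finset.mem_erase,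
    Finset.mem_product, Finset.mem_Icc, Finset.mem_univ, Prod.exists, Bool.exists_bool, ne_eq,
    Prod.mk.injEq, exists_and_right, exists_eq_right, and_true, and_false, Bool.false_eq_true,
    Bool.true_eq_false, not_false_eq_true, true_and]
  omega

lemma Icc_subset_image_fst_verts_deleteVert (n : ℕ) {v : ℕ × Bool} (hv : v ≠ (1, false)) :
    Finset.Icc 1 n ⊆
      (((Dn n).induce ((Dn n).verts.erase (1, true))).deleteVert v).verts.image Prod.fst := by
  intro ℓ hℓ
  rcases eq_or_ne v (ℓ, false) with rfl | hne
  · exact Finset.mem_image.mpr ⟨(ℓ, true), by simp_all [deleteVert, induce, Dn], rfl⟩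
  · exact Finset.mem_image.mpr
      ⟨(ℓ, false), by simp_all [deleteVert, induce, Dn, Ne.symm hne], rfl⟩

end FinDigraph

open FinDigraph in
theorem unique_optimal_first_move_Dn_general (n : ℕ)
    (F : FinDigraph (ℕ × Bool)) (hF : F = (Dn n).induce ((Dn n).verts.erase (1, true))) :
    ddp (F.deleteVert (1, false)) = n - 1 ∧
    ∀ v ∈ F.verts, v ≠ (1, false) → n ≤ ddp (F.deleteVert v) := by
  subst hF
  have hl := (isLayered_Dn n).induce ((Dn n).verts.erase (1, true))
  refine ⟨?_, fun v _ hv => ?_⟩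
  · rw [(hl.deleteVert _).ddp_eq, image_fst_verts_deleteVert_a₁, Nat.card_Icc]
    omega
  · rw [(hl.deleteVert _).ddp_eq]
    simpa using Finset.card_le_card (Icc_subset_image_fst_verts_deleteVert n hv)

open FinDigraph in
/-- For `n ≥ 2`, let `F = Dn n [V(Dn n) ∖ {b_1}]` be the induced subdigraph of `Dn n`
on the reachable fragment `V(Dn n) ∖ {b_1}` (where `a_1 = (1, false)`,
`b_1 = (1, true)`).  Then `ddp (F − a_1) = n − 1`, while `ddp (F − v) ≥ n` for every
vertex `v ≠ a_1` of `F`; hence `a_1` is the only optimal first cop placement in `F`. -/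
theorem unique_optimal_first_move_Dn (n : ℕ) (hn : 2 ≤ n)
    (F : FinDigraph (ℕ × Bool)) (hF : F = (Dn n).induce ((Dn n).verts.erase (1, true))) :
    ddp (F.deleteVert (1, false)) = n - 1 ∧
    ∀ v ∈ F.verts, v ≠ (1, false) → n ≤ ddp (F.deleteVert v) :=
  unique_optimal_first_move_Dn_general n F hF
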